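/- Suppose (w*, r*) is a saddle point of g(w, r) = Σ_i w_i J_i(r_i) over W × R, where W is the probability simplex, each J_i is strictly decreasing on [r_low_i, r_high_i], and w*_i > 0 for all i. Then the max-min fair allocation is unique: any other saddle point (w*, r**) with the same weight w* satisfies r** = r*. -/

import Mathlib

/-!
At a saddle point `(w, r)` of `g w r = ∑ i, w i * J i (r i)`, the weight player can move all
mass to any single coordinate, so every `J i (r i)` is at most the game value; since the value
is the `w`-average of these terms and all weights are positive, each of them equals the value.
Two saddle points with the same `w` have the same value, so `J i (r i) = J i (r' i)` for
every `i`, and strict monotonicity of `J i` gives `r i = r' i`.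
-/

open Finset

def simplex (n : ℕ) : Set (Fin n → ℝ) :=
  {w | (∑ i, w i) = 1 ∧ ∀ i, 0 ≤ w i}

def IsSaddlePoint {α β : Type*} (W : Set α) (R : Set β) (g : α → β → ℝ) (w : α) (r : β) : Prop :=
  w ∈ W ∧ r ∈ R ∧ (∀ w' ∈ W, g w' r ≤ g w r) ∧ (∀ r' ∈ R, g w r ≤ g w r')

lemma single_mem_simplex {n : ℕ} (i : Fin n) : Pi.single i 1 ∈ simplex n :=
  ⟨by simp, fun j => by by_cases h : j = i <;> simp [h]⟩

lemma eq_of_le_of_weighted_sum_eq {ι : Type*} [Fintype ι] {w a : ι → ℝ} {v : ℝ}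
    (hw : ∑ i, w i = 1) (hpos : ∀ i, 0 < w i) (hle : ∀ i, a i ≤ v)
    (hsum : ∑ i, w i * a i = v) (i : ι) : a i = v := by
  by_contra hne
  have hlt : ∑ j, w j * a j < ∑ j, w j * v :=
    sum_lt_sum (fun j _ => mul_le_mul_of_nonneg_left (hle j) (hpos j).le)
      ⟨i, mem_univ i, mul_lt_mul_of_pos_left (lt_of_le_of_ne (hle i) hne) (hpos i)⟩
  rw [← sum_mul, hw, one_mul] at hlt
  linarith

namespace IsSaddlePoint

lemma value_eq {α β : Type*} {W : Set α} {R : Set β} {g : α → β → ℝ} {w : α} {r r' : β}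
    (h : IsSaddlePoint W R g w r) (h' : IsSaddlePoint W R g w r') : g w r = g w r' :=
  le_antisymm (h.2.2.2 _ h'.2.1) (h'.2.2.2 _ h.2.1)

lemma apply_eq_value {n : ℕ} {J : Fin n → ℝ → ℝ} {R : Set (Fin n → ℝ)} {w r : Fin n → ℝ}
    (h : IsSaddlePoint (simplex n) R (fun w r => ∑ i, w i * J i (r i)) w r)
    (hpos : ∀ i, 0 < w i) (i : Fin n) : J i (r i) = ∑ j, w j * J j (r j) :=
  eq_of_le_of_weighted_sum_eq h.1.1 hpos
    (fun j => by simpa [Pi.single_apply] using h.2.2.1 _ (single_mem_simplex j)) rfl i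

end IsSaddlePoint

theorem allocation_unique_general {n : ℕ} (J : Fin n → ℝ → ℝ) (rlow rhigh : Fin n → ℝ)
    (Rtot : ℝ)
    (R : Set (Fin n → ℝ))
    (hRdef : R = {r | (∑ i, r i) ≤ Rtot ∧ ∀ i, rlow i ≤ r i ∧ r i ≤ rhigh i})
    (hanti : ∀ i, StrictAntiOn (J i) (Set.Icc (rlow i) (rhigh i)))
    (g : (Fin n → ℝ) → (Fin n → ℝ) → ℝ)
    (hg : ∀ w r, g w r = ∑ i, w i * J i (r i))
    (wstar rstar rstarstar : Fin n → ℝ)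
    (hwpos : ∀ i, 0 < wstar i)
    (h₁ : IsSaddlePoint (simplex n) R g wstar rstar)
    (h₂ : IsSaddlePoint (simplex n) R g wstar rstarstar) :
    rstarstar = rstar := by
  obtain rfl : g = fun w r => ∑ i, w i * J i (r i) := funext₂ hg
  have hIcc : ∀ {r}, r ∈ R → ∀ i, r i ∈ Set.Icc (rlow i) (rhigh i) := by
    subst hRdef
    exact fun hr i => hr.2 i
  funext i
  refine (hanti i).injOn (hIcc h₂.2.1 i) (hIcc h₁.2.1 i) ?_
  rw [h₂.apply_eq_value hwpos, h₁.apply_eq_value hwpos, h₁.value_eq h₂]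

/-- if all equilibrium weights are positive and each `J_i` is strictly
decreasing on its feasible interval, the max-min fair allocation is unique: any other
saddle point with the same weight vector has the same allocation. -/
theorem allocation_unique {n : ℕ} (J : Fin n → ℝ → ℝ) (rlow rhigh : Fin n → ℝ)
    (Rtot : ℝ) (hfeas : (∑ i, rlow i) < Rtot)
    (R : Set (Fin n → ℝ))
    (hRdef : R = {r | (∑ i, r i) ≤ Rtot ∧ ∀ i, rlow i ≤ r i ∧ r i ≤ rhigh i})
    (hcont : ∀ i, ContinuousOn (J i) (Set.Icc (rlow i) (rhigh i)))
    (hanti : ∀ i, StrictAntiOn (J i) (Set.Icc (rlow i) (rhigh i)))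
    (g : (Fin n → ℝ) → (Fin n → ℝ) → ℝ)
    (hg : ∀ w r, g w r = ∑ i, w i * J i (r i))
    (wstar rstar rstarstar : Fin n → ℝ)
    (hwpos : ∀ i, 0 < wstar i)
    (h₁ : IsSaddlePoint (simplex n) R g wstar rstar)
    (h₂ : IsSaddlePoint (simplex n) R g wstar rstarstar) :
    rstarstar = rstar :=
  allocation_unique_general J rlow rhigh Rtot R hRdef hanti g hg wstar rstar rstarstar hwpos h₁ h₂
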